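/- arXiv:0906.3079 — 3 statements merged into one kernel-verified Lean document; each statement's English description precedes it below -/
import Mathlib

section
/- (Example 3.1, derivative formula) Let z be an n×m complex matrix such that 𝟙 − zb is invertible. Then 𝟙 − bz is also invertible, the map g is complex differentiable at z, and its complex Fréchet derivative is given by (Dg)(z)(α) = (𝟙 − zb)⁻¹ · α · (𝟙 − bz)⁻¹ for every α ∈ ℂ^{n×m}. -/
/-!
With `P = (1 - z b)⁻¹`, the product rule and `d(X⁻¹) = -X⁻¹ dX X⁻¹` give
`Dg(z) α = P α + P α b P z = P α (1 + b P z)`. Both the invertibility of `1 - b z` and the identity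
`1 + b P z = (1 - b z)⁻¹` come from comparing `1 - z b` with `1 - b z`: they have the same
determinant, and `(1 - z b) z = z (1 - b z)` (push-through).
-/

open Matrix

attribute [local instance] Matrix.frobeniusNormedAddCommGroup Matrix.frobeniusNormedSpace
attribute [local instance] Matrix.frobeniusNormedRing Matrix.frobeniusNormedAlgebra

namespace Matrix

variable {l m n : Type*} [Fintype l] [Fintype m] [Fintype n]

section Algebra

variable [DecidableEq m] [DecidableEq n]
variable {R : Type*} [CommRing R]

theorem isUnit_one_sub_mul_comm (A : Matrix m n R) (B : Matrix n m R) :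
    IsUnit (1 - A * B) ↔ IsUnit (1 - B * A) := by
  rw [isUnit_iff_isUnit_det, isUnit_iff_isUnit_det, det_one_sub_mul_comm]

/-- No invertibility hypothesis is needed: `1 - A * B` and `1 - B * A` have the same determinant,
so either both inverses are genuine or both are the junk value `0`. -/
theorem inv_one_sub_mul_mul (A : Matrix m n R) (B : Matrix n m R) :
    (1 - A * B)⁻¹ * A = A * (1 - B * A)⁻¹ := by
  by_cases hAB : IsUnit (1 - A * B)
  · have hBA := (isUnit_one_sub_mul_comm A B).mp hAB
    rw [isUnit_iff_isUnit_det] at hAB hBA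
    have push_through : (1 - A * B) * A = A * (1 - B * A) := by
      simp only [Matrix.sub_mul, Matrix.mul_sub, Matrix.one_mul, Matrix.mul_one, Matrix.mul_assoc]
    calc (1 - A * B)⁻¹ * A = (1 - A * B)⁻¹ * A * ((1 - B * A) * (1 - B * A)⁻¹) := by
          rw [mul_nonsing_inv _ hBA, Matrix.mul_one]
      _ = (1 - A * B)⁻¹ * ((1 - A * B) * A) * (1 - B * A)⁻¹ := by
          rw [push_through]; simp only [Matrix.mul_assoc]
      _ = A * (1 - B * A)⁻¹ := by
          rw [← Matrix.mul_assoc (1 - A * B)⁻¹, nonsing_inv_mul _ hAB, Matrix.one_mul]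
  · have hBA := mt (isUnit_one_sub_mul_comm A B).mpr hAB
    rw [isUnit_iff_isUnit_det] at hAB hBA
    rw [nonsing_inv_apply_not_isUnit _ hAB, nonsing_inv_apply_not_isUnit _ hBA,
      Matrix.zero_mul, Matrix.mul_zero]

theorem inv_one_sub_mul_comm (A : Matrix m n R) (B : Matrix n m R) (h : IsUnit (1 - A * B)) :
    (1 - B * A)⁻¹ = 1 + B * (1 - A * B)⁻¹ * A := by
  have hBA := (isUnit_iff_isUnit_det _).mp ((isUnit_one_sub_mul_comm A B).mp h)
  have right_inv := mul_nonsing_inv _ hBA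
  rw [Matrix.mul_assoc, inv_one_sub_mul_mul, ← Matrix.mul_assoc]
  rw [Matrix.sub_mul, Matrix.one_mul] at right_inv
  exact sub_eq_iff_eq_add.mp right_inv

end Algebra

section Calculus

variable {𝕜 : Type*} [RCLike 𝕜]

variable (l m n 𝕜) in
noncomputable def mulL : Matrix l m 𝕜 →L[𝕜] Matrix m n 𝕜 →L[𝕜] Matrix l n 𝕜 :=
  (mulLinearMap 𝕜).mkContinuous₂ 1 fun A B => by
    simpa [one_mul] using frobenius_norm_mul A B

variable [DecidableEq m] [DecidableEq n]

theorem hasFDerivAt_nonsing_inv {A : Matrix n n 𝕜} (hA : IsUnit A) :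
    HasFDerivAt (fun X : Matrix n n 𝕜 => X⁻¹)
      (-ContinuousLinearMap.mulLeftRight 𝕜 (Matrix n n 𝕜) A⁻¹ A⁻¹) A := by
  obtain ⟨u, rfl⟩ := hA
  simpa only [← Matrix.coe_units_inv, funext fun X : Matrix n n 𝕜 => nonsing_inv_eq_ringInverse X]
    using hasFDerivAt_ringInverse (𝕜 := 𝕜) u

theorem hasFDerivAt_inv_one_sub_mul_mul (b : Matrix m n 𝕜) {z : Matrix n m 𝕜}
    (hz : IsUnit (1 - z * b)) :
    HasFDerivAt (fun w : Matrix n m 𝕜 => (1 - w * b)⁻¹ * w)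
      ((mulL n n m 𝕜 (1 - z * b)⁻¹).comp ((mulL n m m 𝕜).flip (1 - b * z)⁻¹)) z := by
  have hmulb : HasFDerivAt (fun w : Matrix n m 𝕜 => 1 - w * b) (-(mulL n m n 𝕜).flip b) z :=
    ((mulL n m n 𝕜).flip b).hasFDerivAt.const_sub 1
  have hinv := (hasFDerivAt_nonsing_inv hz).comp z hmulb
  have hprod := (mulL n n m 𝕜).hasFDerivAt_of_bilinear hinv (hasFDerivAt_id z)
  refine hprod.congr_fderiv (ContinuousLinearMap.ext fun α => ?_)
  -- The maps above carry both the Frobenius and the product topology on matrices (defeq, but not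
  -- reducibly), so `simp` cannot evaluate them; unfolding by `change` can.
  change (1 - z * b)⁻¹ * α + -((1 - z * b)⁻¹ * -(α * b) * (1 - z * b)⁻¹) * z
    = (1 - z * b)⁻¹ * (α * (1 - b * z)⁻¹)
  rw [inv_one_sub_mul_comm z b hz]
  simp only [neg_mul, mul_neg, neg_neg, Matrix.mul_add, Matrix.mul_one, Matrix.mul_assoc]

end Calculus

end Matrix

theorem example_3_1_derivative_general (n m : ℕ)
    (b : Matrix (Fin m) (Fin n) ℂ) (z : Matrix (Fin n) (Fin m) ℂ)
    (hz : IsUnit (1 - z * b)) :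
    IsUnit (1 - b * z) ∧
      DifferentiableAt ℂ (fun w : Matrix (Fin n) (Fin m) ℂ => (1 - w * b)⁻¹ * w) z ∧
      ∀ α : Matrix (Fin n) (Fin m) ℂ,
        fderiv ℂ (fun w : Matrix (Fin n) (Fin m) ℂ => (1 - w * b)⁻¹ * w) z α =
          (1 - z * b)⁻¹ * α * (1 - b * z)⁻¹ := by
  have hg := hasFDerivAt_inv_one_sub_mul_mul b hz
  refine ⟨(isUnit_one_sub_mul_comm z b).mp hz, hg.differentiableAt, fun α => ?_⟩
  exact (DFunLike.congr_fun hg.fderiv α).trans (Matrix.mul_assoc _ α _).symm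

/-- Example 3.1 (derivative formula): if `𝟙 − zb` is invertible then so is `𝟙 − bz`,
the map `g(z) = (𝟙 − zb)⁻¹ z` is complex differentiable at `z`, and its complex Fréchet
derivative is `α ↦ (𝟙 − zb)⁻¹ · α · (𝟙 − bz)⁻¹`. -/
theorem example_3_1_derivative (n m : ℕ) (hn : 1 ≤ n) (hm : 1 ≤ m)
    (b : Matrix (Fin m) (Fin n) ℂ) (z : Matrix (Fin n) (Fin m) ℂ)
    (hz : IsUnit (1 - z * b)) :
    IsUnit (1 - b * z) ∧
      DifferentiableAt ℂ (fun w : Matrix (Fin n) (Fin m) ℂ => (1 - w * b)⁻¹ * w) z ∧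
      ∀ α : Matrix (Fin n) (Fin m) ℂ,
        fderiv ℂ (fun w : Matrix (Fin n) (Fin m) ℂ => (1 - w * b)⁻¹ * w) z α =
          (1 - z * b)⁻¹ * α * (1 - b * z)⁻¹ :=
  example_3_1_derivative_general n m b z hz
end

section
/- (Key step in the proof of Proposition 2.2) Let r, s be polynomials in n complex variables with s ≠ 0, and let a ∈ ℂⁿ be a point with s(a) = 0 and r(a) ≠ 0. Then there exists an index k ∈ {1,…,n} such that the rational function ∂(r/s)/∂z_k = (s·∂r/∂z_k − r·∂s/∂z_k)/s² is not regular at a; precisely, for all polynomials u, v in n variables with v(a) ≠ 0 one has v·(s·∂r/∂z_k − r·∂s/∂z_k) ≠ u·s². -/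
/-!
Take a prime factor `p` of `s` with `p(a) = 0` and a variable `z_k` occurring in `p`; comparing
degrees in `z_k` shows `p ∤ ∂p/∂z_k`. Writing `s = p ^ (m + 1) * t` with `p ∤ t`, the numerator
`s ∂r/∂z_k - r ∂s/∂z_k` is then not divisible by `p ^ (m + 1)`. But `p ^ (m + 1)` divides
`u s² = v (s ∂r/∂z_k - r ∂s/∂z_k)` and `p ∤ v` since `v(a) ≠ 0`.
-/

open MvPolynomial

theorem Ideal.IsPrime.exists_prime_dvd_mem {R : Type*} [CommSemiring R]
    [UniqueFactorizationMonoid R] {I : Ideal R} (hI : I.IsPrime) {a : R} (ha : a ∈ I)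
    (ha₀ : a ≠ 0) : ∃ p ∈ I, Prime p ∧ p ∣ a := by
  obtain ⟨u, hu⟩ := UniqueFactorizationMonoid.factors_prod ha₀
  rw [← hu, Ideal.mul_unit_mem_iff_mem _ u.isUnit] at ha
  obtain ⟨p, hp, hpI⟩ := (hI.multiset_prod_mem_iff_exists_mem _).1 ha
  exact ⟨p, hpI, UniqueFactorizationMonoid.prime_of_factor p hp,
    UniqueFactorizationMonoid.dvd_of_mem_factors hp⟩

theorem RingHom.not_dvd_of_map_eq_zero {A B : Type*} [CommSemiring A] [Semiring B]
    (φ : A →+* B) {p q : A} (hp : φ p = 0) (hq : φ q ≠ 0) : ¬ p ∣ q := by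
  rintro ⟨c, rfl⟩
  exact hq (by rw [map_mul, hp, zero_mul])

section QuotientRule

variable {R A : Type*} [CommSemiring R] [CommRing A] [IsDomain A] [Algebra R A]

/-- Writing `s = p ^ (m + 1) * t`, the numerator of `D (r / s)` is `p ^ m` times a term that is
congruent to `-(m + 1) * r * t * D p` modulo `p`. -/
theorem Prime.not_pow_succ_dvd_mul_derivation_sub {p r t : A} (hp : Prime p)
    (D : Derivation R A A) (m : ℕ) (hr : ¬ p ∣ r) (ht : ¬ p ∣ t) (hm : ¬ p ∣ ((m + 1 : ℕ) : A))
    (hDp : ¬ p ∣ D p) :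
    ¬ p ^ (m + 1) ∣ p ^ (m + 1) * t * D r - r * D (p ^ (m + 1) * t) := by
  set X := p * (t * D r - r * D t) - (m + 1 : ℕ) * r * t * D p with hX
  have hfactor : p ^ (m + 1) * t * D r - r * D (p ^ (m + 1) * t) = p ^ m * X := by
    simp only [hX, Derivation.leibniz, Derivation.leibniz_pow, smul_eq_mul, nsmul_eq_mul,
      Nat.add_sub_cancel]
    ring
  rw [hfactor, pow_succ, mul_dvd_mul_iff_left (pow_ne_zero m hp.ne_zero)]
  intro hpX
  have hdvd : p ∣ (m + 1 : ℕ) * r * t * D p :=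
    (dvd_sub_right (dvd_mul_right p _)).1 (by rwa [hX] at hpX)
  exact hp.not_dvd_mul (hp.not_dvd_mul (hp.not_dvd_mul hm hr) ht) hDp hdvd

end QuotientRule

namespace MvPolynomial

variable {R σ : Type*} [CommSemiring R]

theorem exists_mem_vars_of_eval_eq_zero {p : MvPolynomial σ R} (hp : p ≠ 0) {a : σ → R}
    (ha : eval a p = 0) : ∃ i, i ∈ p.vars := by
  by_contra! h
  have hC : p = C (p.coeff 0) := vars_eq_empty_iff_eq_C.1 (Finset.eq_empty_of_forall_notMem h)
  rw [hC, eval_C] at ha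
  exact hp (by rw [hC, ha, C_0])

theorem pderiv_ne_zero_of_mem_vars [CharZero R] [NoZeroDivisors R] {i : σ}
    {p : MvPolynomial σ R} (h : i ∈ p.vars) : pderiv i p ≠ 0 := by
  obtain ⟨d, hd, hdi⟩ := (mem_vars_iff_mem_support i).1 h
  have hle : Finsupp.single i 1 ≤ d :=
    Finsupp.single_le_iff.2 (Nat.one_le_iff_ne_zero.2 (Finsupp.mem_support_iff.1 hdi))
  intro h0
  have := coeff_pderiv (i := i) p (d - Finsupp.single i 1)
  rw [h0, coeff_zero, tsub_add_cancel_of_le hle, eq_comm] at this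
  exact mul_ne_zero (mem_support_iff.1 hd) (Nat.cast_add_one_ne_zero _) this

theorem degreeOf_pderiv_lt {i : σ} {p : MvPolynomial σ R} (h : pderiv i p ≠ 0) :
    degreeOf i (pderiv i p) < degreeOf i p := by
  obtain ⟨m, hm, hmax⟩ := Finset.exists_mem_eq_sup _ (support_nonempty.2 h) (fun m => m i)
  rw [degreeOf_eq_sup, hmax]
  have hm' : m + Finsupp.single i 1 ∈ p.support := by
    rw [mem_support_iff, coeff_pderiv] at hm
    exact mem_support_iff.2 (left_ne_zero_of_mul hm)
  exact Nat.lt_of_succ_le (by simpa using monomial_le_degreeOf i hm')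

theorem degreeOf_le_of_dvd [NoZeroDivisors R] {i : σ} {p q : MvPolynomial σ R} (h : p ∣ q)
    (hq : q ≠ 0) : degreeOf i p ≤ degreeOf i q := by
  obtain ⟨c, rfl⟩ := h
  rw [degreeOf_mul_eq (left_ne_zero_of_mul hq) (right_ne_zero_of_mul hq)]
  exact Nat.le_add_right _ _

theorem pderiv_eq_zero_of_dvd [NoZeroDivisors R] {i : σ} {p : MvPolynomial σ R}
    (h : p ∣ pderiv i p) : pderiv i p = 0 := by
  by_contra h0
  exact (degreeOf_le_of_dvd h h0).not_gt (degreeOf_pderiv_lt h0)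

end MvPolynomial

/-- Key step in the proof of Proposition 2.2: if `s(a) = 0` and `r(a) ≠ 0`, then for some
variable `z_k` the rational function `(s·∂r/∂z_k − r·∂s/∂z_k)/s²` is not regular at `a`:
no representation `u/v` with `v(a) ≠ 0` is possible. -/
theorem key_step_prop_2_2 (n : ℕ) (r s : MvPolynomial (Fin n) ℂ) (hs : s ≠ 0)
    (a : Fin n → ℂ) (hsa : eval a s = 0) (hra : eval a r ≠ 0) :
    ∃ k : Fin n, ∀ u v : MvPolynomial (Fin n) ℂ, eval a v ≠ 0 →
      v * (s * pderiv k r - r * pderiv k s) ≠ u * s ^ 2 := by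
  obtain ⟨p, hpa, hp, hps⟩ :=
    (RingHom.ker_isPrime (eval a)).exists_prime_dvd_mem (RingHom.mem_ker.2 hsa) hs
  rw [RingHom.mem_ker] at hpa
  obtain ⟨k, hk⟩ := exists_mem_vars_of_eval_eq_zero hp.ne_zero hpa
  have hDp : ¬ p ∣ pderiv k p := fun h => pderiv_ne_zero_of_mem_vars hk (pderiv_eq_zero_of_dvd h)
  obtain ⟨_ | m, t, ht, rfl⟩ := WfDvdMonoid.max_power_factor hs hp.irreducible
  · exact absurd (by simpa using hps) ht
  refine ⟨k, fun u v hv huv => ?_⟩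
  have hm : ¬ p ∣ ((m + 1 : ℕ) : MvPolynomial (Fin n) ℂ) :=
    (eval a).not_dvd_of_map_eq_zero hpa (by simpa using Nat.cast_add_one_ne_zero m)
  refine hp.not_pow_succ_dvd_mul_derivation_sub (pderiv k) m
    ((eval a).not_dvd_of_map_eq_zero hpa hra) ht hm hDp
    (hp.pow_dvd_of_dvd_mul_left _ ((eval a).not_dvd_of_map_eq_zero hpa hv) ?_)
  rw [huv]
  exact ((dvd_mul_right _ t).trans (dvd_pow_self _ two_ne_zero)).mul_left u
end

section
/- (Eigenvalues of ad η are integers ≥ −1) Let f be a holomorphic map from the open ball B = B(0,R) ⊆ E to E that is not identically zero on B, and let c ∈ ℂ satisfy (Df)(z)(z) = c·f(z) for all z ∈ B. Then c is a non-negative integer, i.e. there exists d ∈ ℕ with c = d. (Equivalently, in the grading 𝔩 = ⊕ₘ 𝔩^m by eigenspaces of ad η one has 𝔩^m = 0 for m < −1.) -/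
/-!
Restricting `f` to the complex line through a point `z₀` with `f z₀ ≠ 0` gives a holomorphic
`φ t = f (t • z₀)` on a convex open set containing `0` and `1`, satisfying the one-variable
Euler equation `t φ'(t) = c φ(t)`. Differentiating it `n` times gives
`t φ⁽ⁿ⁺¹⁾(t) = (c - n) φ⁽ⁿ⁾(t)`, so at `t = 0` every Taylor coefficient of `φ` vanishes unless
`c = n`. If `c ∉ ℕ`, the identity theorem then forces `φ ≡ 0`, contradicting `φ 1 = f z₀ ≠ 0`.
-/

open Set Filter

section EulerEquation

variable {𝕜 : Type*} [NontriviallyNormedField 𝕜]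
  {F : Type*} [NormedAddCommGroup F] [NormedSpace 𝕜 F] [CompleteSpace F]
  {φ : 𝕜 → F} {U : Set 𝕜} {c : 𝕜}

theorem iteratedDeriv_succ_smul_of_euler (hφ : AnalyticOnNhd 𝕜 φ U) (hU : IsOpen U)
    (heul : ∀ t ∈ U, t • deriv φ t = c • φ t) (n : ℕ) :
    ∀ t ∈ U, t • iteratedDeriv (n + 1) φ t = (c - n) • iteratedDeriv n φ t := by
  induction n with
  | zero => simpa using heul
  | succ n ih =>
    intro t ht
    have hdiff : ∀ k, DifferentiableAt 𝕜 (iteratedDeriv k φ) t := fun k =>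
      (iteratedDeriv_eq_iterate (f := φ) ▸ hφ.iterated_deriv k t ht).differentiableAt
    have hderiv : deriv (fun s => s • iteratedDeriv (n + 1) φ s) t =
        deriv (fun s => (c - n) • iteratedDeriv n φ s) t :=
      EventuallyEq.deriv_eq (eventually_of_mem (hU.mem_nhds ht) ih)
    rw [deriv_fun_smul differentiableAt_fun_id (hdiff _), deriv_fun_const_smul (c - n) (hdiff _),
      ← iteratedDeriv_succ, ← iteratedDeriv_succ, deriv_id'', one_smul] at hderiv
    rw [eq_sub_of_add_eq hderiv]
    push_cast
    module

theorem iteratedDeriv_eq_zero_of_euler (hφ : AnalyticOnNhd 𝕜 φ U) (hU : IsOpen U)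
    (heul : ∀ t ∈ U, t • deriv φ t = c • φ t) (h₀ : 0 ∈ U) {n : ℕ} (hn : c ≠ n) :
    iteratedDeriv n φ 0 = 0 := by
  have h := iteratedDeriv_succ_smul_of_euler hφ hU heul n 0 h₀
  rw [zero_smul, eq_comm, smul_eq_zero] at h
  exact h.resolve_left (sub_ne_zero.mpr hn)

theorem eqOn_zero_of_euler [CharZero 𝕜] (hφ : AnalyticOnNhd 𝕜 φ U) (hU : IsOpen U)
    (hU' : IsPreconnected U) (heul : ∀ t ∈ U, t • deriv φ t = c • φ t) (h₀ : 0 ∈ U)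
    (hc : ∀ n : ℕ, c ≠ n) : EqOn φ 0 U := by
  have horder : analyticOrderAt φ 0 = ⊤ :=
    ENat.eq_top_iff_forall_ge.mpr fun n =>
      (natCast_le_analyticOrderAt_iff_iteratedDeriv_eq_zero (hφ 0 h₀)).mpr fun i _ =>
        iteratedDeriv_eq_zero_of_euler hφ hU heul h₀ (hc i)
  exact hφ.eqOn_zero_of_preconnected_of_eventuallyEq_zero hU' h₀
    (analyticOrderAt_eq_top.mp horder)

end EulerEquation

theorem smul_deriv_comp_smul_of_euler {𝕜 : Type*} [NontriviallyNormedField 𝕜]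
    {E : Type*} [NormedAddCommGroup E] [NormedSpace 𝕜 E]
    {F : Type*} [NormedAddCommGroup F] [NormedSpace 𝕜 F]
    {f : E → F} {c t : 𝕜} {x : E} (hf : DifferentiableAt 𝕜 f (t • x))
    (heig : fderiv 𝕜 f (t • x) (t • x) = c • f (t • x)) :
    t • deriv (fun s : 𝕜 => f (s • x)) t = c • f (t • x) := by
  have hline : HasDerivAt (fun s : 𝕜 => s • x) x t := by
    simpa using (hasDerivAt_id t).smul_const x
  have hcomp : HasDerivAt (fun s : 𝕜 => f (s • x)) (fderiv 𝕜 f (t • x) x) t :=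
    hf.hasFDerivAt.comp_hasDerivAt t hline
  rw [hcomp.deriv, ← map_smul, heig]

/-- Eigenvalues of `ad η` are integers `≥ −1`: if a holomorphic vector field `f` on the ball
`B(0,R)`, not identically zero, satisfies `(Df)(z)(z) = c·f(z)` on the ball, then `c` is a
non-negative integer. -/
theorem euler_eigenvalues_nonneg_int {E : Type*} [NormedAddCommGroup E] [NormedSpace ℂ E]
    [FiniteDimensional ℂ E] (R : ℝ) (hR : 0 < R)
    (f : E → E) (hf : DifferentiableOn ℂ f (Metric.ball (0 : E) R))
    (hne : ∃ z ∈ Metric.ball (0 : E) R, f z ≠ 0)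
    (c : ℂ) (heig : ∀ z ∈ Metric.ball (0 : E) R, fderiv ℂ f z z = c • f z) :
    ∃ d : ℕ, c = (d : ℂ) := by
  obtain ⟨z₀, hz₀, hfz₀⟩ := hne
  set U : Set ℂ := (fun t : ℂ => t • z₀) ⁻¹' Metric.ball 0 R
  have hU : IsOpen U := Metric.isOpen_ball.preimage (continuous_id.smul continuous_const)
  have hU' : IsPreconnected U :=
    Convex.isPreconnected (s := U) ((convex_ball (0 : E) R).linear_preimage
      ((LinearMap.toSpanSingleton ℂ E z₀).restrictScalars ℝ))
  have h₀ : (0 : ℂ) ∈ U := by simpa [U] using hR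
  have h₁ : (1 : ℂ) ∈ U := by simpa [U] using hz₀
  have hφ : DifferentiableOn ℂ (fun t : ℂ => f (t • z₀)) U :=
    hf.comp (differentiableOn_id.smul_const z₀) fun _ ht => ht
  have heul : ∀ t ∈ U, t • deriv (fun s : ℂ => f (s • z₀)) t = c • f (t • z₀) := fun t ht =>
    smul_deriv_comp_smul_of_euler (hf.differentiableAt (Metric.isOpen_ball.mem_nhds ht))
      (heig _ ht)
  by_contra! hc
  exact hfz₀ (by simpa using
    eqOn_zero_of_euler (hφ.analyticOnNhd hU) hU hU' heul h₀ hc h₁)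
end
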